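/- arXiv:1509.04507 — 5 statements merged into one kernel-verified Lean document; each statement's English description precedes it below -/
import Mathlib

section
/- Let H^MPS_{D,m} ⊆ ((Fin m → Fin d) → ℂ) be the ℂ-linear span of all m-site matrix product states ψ(ω,A,m) with ω ∈ M_D(ℂ) and A : Fin d → M_D(ℂ). With respect to the standard Hermitian inner product, the orthogonal complement of H^MPS_{D,m} equals the set of vectors v : (Fin m → Fin d) → ℂ such that the polynomial with coefficients conj(v) is a matrix polynomial identity for dimension D, i.e., Σ_{j} conj(v(j)) · A_{j_1}⋯A_{j_m} = 0 for all A : Fin d → M_D(ℂ). -/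
/-!
Sesquilinearity gives `⟪v, ψ(ω,A,m)⟫ = tr(ω · P(A))`, where `P` is the polynomial with
coefficients `conj v`. Since the trace pairing on `M_D(ℂ)` is nondegenerate, `v` is orthogonal
to every MPS exactly when `P(A) = 0` for every `A`.
-/

open Matrix

/-- The ordered matrix product `A_{i_1} ⋯ A_{i_n}` associated to an index string `i`. -/
noncomputable def mpsProd {d D n : ℕ} (A : Fin d → Matrix (Fin D) (Fin D) ℂ)
    (i : Fin n → Fin d) : Matrix (Fin D) (Fin D) ℂ :=
  ((List.finRange n).map fun t => A (i t)).prod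

/-- The matrix product state `ψ(ω,A,n)`, as a vector of `(ℂ^d)^{⊗n}` modeled by
`EuclideanSpace ℂ (Fin n → Fin d)`. -/
noncomputable def mps {d D n : ℕ} (ω : Matrix (Fin D) (Fin D) ℂ)
    (A : Fin d → Matrix (Fin D) (Fin D) ℂ) : EuclideanSpace ℂ (Fin n → Fin d) :=
  WithLp.toLp 2 fun i => (ω * mpsProd A i).trace

theorem Submodule.mem_orthogonal_span_iff {𝕜 E : Type*} [RCLike 𝕜] [NormedAddCommGroup E]
    [InnerProductSpace 𝕜 E] {s : Set E} {v : E} :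
    v ∈ (span 𝕜 s)ᗮ ↔ ∀ u ∈ s, inner 𝕜 v u = 0 := by
  rw [← span_singleton_le_iff_mem, ← isOrtho_iff_le, isOrtho_span]
  simp

theorem Matrix.forall_trace_mul_eq_zero_iff {n R : Type*} [Fintype n] [NonAssocSemiring R]
    {A : Matrix n n R} : (∀ x : Matrix n n R, (x * A).trace = 0) ↔ A = 0 := by
  simp [ext_iff_trace_mul_left (B := (0 : Matrix n n R))]

theorem inner_mps_eq_trace {d D m : ℕ} (v : EuclideanSpace ℂ (Fin m → Fin d))
    (ω : Matrix (Fin D) (Fin D) ℂ) (A : Fin d → Matrix (Fin D) (Fin D) ℂ) :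
    inner ℂ v (mps (n := m) ω A)
      = (ω * ∑ j : Fin m → Fin d, (starRingEnd ℂ) (v j) • mpsProd A j).trace := by
  simp [PiLp.inner_apply, mps, Matrix.mul_sum, trace_sum, mul_comm]

theorem stmt2_general (d D m : ℕ) :
    ((Submodule.span ℂ (Set.range fun ωA :
        Matrix (Fin D) (Fin D) ℂ × (Fin d → Matrix (Fin D) (Fin D) ℂ) =>
          mps (n := m) ωA.1 ωA.2))ᗮ : Set (EuclideanSpace ℂ (Fin m → Fin d)))
      = { v : EuclideanSpace ℂ (Fin m → Fin d) |
          ∀ A : Fin d → Matrix (Fin D) (Fin D) ℂ,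
            ∑ j : Fin m → Fin d, (starRingEnd ℂ) (v j) • mpsProd A j = 0 } := by
  ext v
  simp only [SetLike.mem_coe, Set.mem_ofPred_eq, Submodule.mem_orthogonal_span_iff,
    Set.forall_mem_range, Prod.forall, inner_mps_eq_trace]
  rw [forall_comm]
  exact forall_congr' fun A => forall_trace_mul_eq_zero_iff

/-- The orthogonal complement of the span of matrix product states of bond
dimension `D` is exactly the set of vectors whose conjugated coefficient tensor is a
matrix polynomial identity for dimension `D`. -/
theorem stmt2 (d D m : ℕ) (hd : 0 < d) (hD : 0 < D) :
    ((Submodule.span ℂ (Set.range fun ωA :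
        Matrix (Fin D) (Fin D) ℂ × (Fin d → Matrix (Fin D) (Fin D) ℂ) =>
          mps (n := m) ωA.1 ωA.2))ᗮ : Set (EuclideanSpace ℂ (Fin m → Fin d)))
      = { v : EuclideanSpace ℂ (Fin m → Fin d) |
          ∀ A : Fin d → Matrix (Fin D) (Fin D) ℂ,
            ∑ j : Fin m → Fin d, (starRingEnd ℂ) (v j) • mpsProd A j = 0 } :=
  stmt2_general d D m
end

section
/- Fix D ≥ 1 and let B₁ = Σ_{j=1}^{D} j·E_{jj} ∈ M_D(ℂ) (the diagonal matrix with entries 1,2,…,D) and B₂ = (1/D)·Σ_{i,j=1}^{D} E_{ij} ∈ M_D(ℂ) (the matrix all of whose entries equal 1/D). Then the ℂ-linear span of all products w₁·w₂⋯w_{2D+1}, where each factor w_k ∈ {B₁, B₂}, is all of M_D(ℂ). In particular, the pair (B₁,B₂) satisfies the injectivity condition at order 2D+1. -/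
/-!
`B₂` is the idempotent `(1/D)·𝟙𝟙ᵀ`, so every word `B₁ᵃ B₂ᵐ B₁ᵇ` with `m ≥ 1` equals
`B₁ᵃ B₂ B₁ᵇ = (1/D)·(dᵃ)(dᵇ)ᵀ`, where `d = (1, …, D)`. For `a, b < D` such words have length
`2D + 1` after padding the middle block. Since the entries of `d` are distinct, the Vandermonde
vectors `dᵃ` (`a < D`) span `ℂᴰ`, and the rank-one matrices `x yᵀ` with `x, y` running over
spanning sets span all of `M_D(ℂ)`.
-/

open Matrix Submodule

theorem Matrix.span_image2_vecMulVec_eq_top {R m n : Type*} [CommSemiring R] [Fintype m]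
    [Fintype n] [DecidableEq m] [DecidableEq n] {s : Set (m → R)} {t : Set (n → R)}
    (hs : span R s = ⊤) (ht : span R t = ⊤) :
    span R (Set.image2 vecMulVec s t) = ⊤ := by
  have h := map₂_span_span R (vecMulVecBilin R R) s t
  simp only [vecMulVecBilin_apply_apply, hs, ht] at h
  rw [← h, eq_top_iff, ← (stdBasis R m n).span_eq, span_le]
  rintro _ ⟨⟨i, j⟩, rfl⟩
  rw [stdBasis_eq_single, single_eq_single_vecMulVec_single]
  exact apply_mem_map₂ _ mem_top mem_top

theorem span_range_pow_eq_top {K : Type*} [Field K] {n : ℕ} {v : Fin n → K}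
    (hv : Function.Injective v) :
    span K (Set.range fun a : Fin n => fun i => v i ^ (a : ℕ)) = ⊤ :=
  (linearIndependent_cols_of_det_ne_zero
    (det_vandermonde_ne_zero_iff.2 hv)).span_eq_top_of_card_eq_finrank' (by simp)

theorem Matrix.isIdempotentElem_of_const {R n : Type*} [Semiring R] [Fintype n] {c : R}
    (hc : (Fintype.card n : R) * c = 1) : IsIdempotentElem (of fun _ _ : n => c) := by
  ext i j
  simp [mul_apply, ← mul_assoc, hc]

theorem Matrix.diagonal_mul_const_mul_diagonal {R n : Type*} [CommSemiring R] [Fintype n]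
    [DecidableEq n] (x y : n → R) (c : R) :
    diagonal x * of (fun _ _ : n => c) * diagonal y = c • vecMulVec x y := by
  ext i j
  simp only [mul_diagonal, diagonal_mul, of_apply, smul_apply, vecMulVec_apply, smul_eq_mul]
  ring

def wordProducts {M ι : Type*} [Monoid M] (f : ι → M) (N : ℕ) : Set M :=
  {x | ∃ w : Fin N → ι, x = ((List.finRange N).map fun t => f (w t)).prod}

theorem List.exists_finRange_map_eq {α : Type*} (l : List α) {N : ℕ} (hl : l.length = N) :
    ∃ w : Fin N → α, (List.finRange N).map w = l := by
  subst hl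
  exact ⟨l.get, List.map_get_finRange l⟩

theorem pow_mul_mul_pow_mem_wordProducts {M ι : Type*} [Monoid M] (f : ι → M) {i j : ι}
    (hj : IsIdempotentElem (f j)) {a b N : ℕ} (hN : a + b < N) :
    f i ^ a * f j * f i ^ b ∈ wordProducts f N := by
  obtain ⟨w, hw⟩ :=
    (List.replicate a i ++ List.replicate (N - a - b) j ++ List.replicate b i).exists_finRange_map_eq
      (N := N) (by simp only [List.length_append, List.length_replicate]; omega)
  refine ⟨w, ?_⟩
  change _ = ((List.finRange N).map (f ∘ w)).prod
  rw [← List.map_map, hw]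
  simp [List.prod_replicate, hj.pow_eq (by omega : N - a - b ≠ 0), mul_assoc]

/-- The pair `B₁ = diag(1,…,D)`, `B₂ = (1/D)·(all-ones matrix)` satisfies the injectivity
condition at order `2D+1`: the products of length `2D+1` in `B₁, B₂` span all of `M_D(ℂ)`. -/
theorem stmt6 (D : ℕ) (hD : 0 < D) :
    Submodule.span ℂ { M : Matrix (Fin D) (Fin D) ℂ |
        ∃ w : Fin (2 * D + 1) → Fin 2,
          M = ((List.finRange (2 * D + 1)).map fun t =>
            ![Matrix.diagonal (fun j : Fin D => ((j : ℕ) + 1 : ℂ)),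
              Matrix.of (fun _ _ : Fin D => (1 / (D : ℂ)))] (w t)).prod } = ⊤ := by
  set d : Fin D → ℂ := fun j => (j : ℕ) + 1
  set B₂ : Matrix (Fin D) (Fin D) ℂ := of fun _ _ => 1 / (D : ℂ)
  change span ℂ (wordProducts ![diagonal d, B₂] (2 * D + 1)) = ⊤
  have hD₀ : (D : ℂ) ≠ 0 := by exact_mod_cast hD.ne'
  have hd : Function.Injective d := fun i j h => Fin.ext (by simpa [d] using h)
  have hB₂ : IsIdempotentElem B₂ := isIdempotentElem_of_const (by simp [hD₀])
  rw [eq_top_iff, ← span_image2_vecMulVec_eq_top (span_range_pow_eq_top hd)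
    (span_range_pow_eq_top hd), span_le]
  rintro _ ⟨_, ⟨a, rfl⟩, _, ⟨b, rfl⟩, rfl⟩
  have hword := pow_mul_mul_pow_mem_wordProducts ![diagonal d, B₂] (i := 0) (j := 1) hB₂
    (N := 2 * D + 1) (a := a) (b := b) (by omega)
  have hprod : diagonal d ^ (a : ℕ) * B₂ * diagonal d ^ (b : ℕ) =
      (1 / (D : ℂ)) • vecMulVec (fun i => d i ^ (a : ℕ)) (fun i => d i ^ (b : ℕ)) := by
    rw [diagonal_pow, diagonal_pow]
    exact diagonal_mul_const_mul_diagonal _ _ _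
  simp only [cons_val_zero, cons_val_one, hprod] at hword
  simpa [smul_smul, hD₀] using smul_mem _ (D : ℂ) (subset_span hword)
end

section
/- Let p : (Fin m → Fin d) → ℂ be a homogeneous noncommutative polynomial of degree m in d variables. Then p is central for dimension D (i.e., for every A : Fin d → M_D(ℂ) there is c ∈ ℂ with Σ_j p(j)·A_{j_1}⋯A_{j_m} = c·I) if and only if for every traceless σ ∈ M_D(ℂ) and every A : Fin d → M_D(ℂ) one has Σ_{j : Fin m → Fin d} p(j) · tr(σ · A_{j_1}⋯A_{j_m}) = 0; equivalently, the vector with coefficients conj(p) is orthogonal to the span of all m-site matrix product states ψ(σ,A,m) with traceless boundary condition σ. -/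
open Matrix

namespace Matrix

variable {ι n R : Type*} [Fintype n]

theorem trace_mul_sum_smul [Fintype ι] [CommSemiring R] (c : ι → R) (σ : Matrix n n R)
    (M : ι → Matrix n n R) :
    (σ * ∑ j, c j • M j).trace = ∑ j, c j * (σ * M j).trace := by
  simp only [Matrix.mul_sum, trace_sum, Matrix.mul_smul, trace_smul, smul_eq_mul]

/-- The commutators `x * B - B * x` are traceless, and they pair with `M` to
`tr (x * (B * M - M * B))`; hence `M` commutes with every `B`. -/
theorem commute_of_trace_mul_eq_zero [CommRing R] {M : Matrix n n R}
    (hM : ∀ σ : Matrix n n R, σ.trace = 0 → (σ * M).trace = 0) (B : Matrix n n R) :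
    Commute B M := by
  refine ext_iff_trace_mul_left.mpr fun x => ?_
  have hcomm := hM (x * B - B * x) (by rw [trace_sub, trace_mul_comm, sub_self])
  rw [Matrix.sub_mul, trace_sub, Matrix.mul_assoc B, trace_mul_comm B, sub_eq_zero] at hcomm
  simpa only [Matrix.mul_assoc] using hcomm

theorem exists_eq_smul_one_iff_trace_mul_eq_zero [DecidableEq n] [CommRing R]
    (M : Matrix n n R) :
    (∃ c : R, M = c • (1 : Matrix n n R)) ↔
      ∀ σ : Matrix n n R, σ.trace = 0 → (σ * M).trace = 0 := by
  constructor
  · rintro ⟨c, rfl⟩ σ hσ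
    rw [Matrix.mul_smul, Matrix.mul_one, trace_smul, hσ, smul_zero]
  · intro hM
    obtain ⟨c, hc⟩ := mem_range_scalar_iff_commute_single'.mpr fun i j =>
      commute_of_trace_mul_eq_zero hM (single i j 1)
    exact ⟨c, by rw [← hc, scalar_apply, smul_one_eq_diagonal]⟩

end Matrix

theorem stmt9_general (d D m : ℕ)
    (p : (Fin m → Fin d) → ℂ) :
    (∀ A : Fin d → Matrix (Fin D) (Fin D) ℂ, ∃ c : ℂ,
        ∑ j : Fin m → Fin d, p j • mpsProd A j = c • (1 : Matrix (Fin D) (Fin D) ℂ))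
      ↔ (∀ σ : Matrix (Fin D) (Fin D) ℂ, σ.trace = 0 →
          ∀ A : Fin d → Matrix (Fin D) (Fin D) ℂ,
            ∑ j : Fin m → Fin d, p j * (σ * mpsProd A j).trace = 0) := by
  simp_rw [exists_eq_smul_one_iff_trace_mul_eq_zero, trace_mul_sum_smul]
  exact ⟨fun h σ hσ A => h A σ hσ, fun h A σ hσ => h σ hσ A⟩

/-- A homogeneous noncommutative polynomial `p` is central for dimension `D` if and only
if it is annihilated by every matrix product state with traceless boundary condition. -/
theorem stmt9 (d D m : ℕ) (hd : 0 < d) (hD : 0 < D)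
    (p : (Fin m → Fin d) → ℂ) :
    (∀ A : Fin d → Matrix (Fin D) (Fin D) ℂ, ∃ c : ℂ,
        ∑ j : Fin m → Fin d, p j • mpsProd A j = c • (1 : Matrix (Fin D) (Fin D) ℂ))
      ↔ (∀ σ : Matrix (Fin D) (Fin D) ℂ, σ.trace = 0 →
          ∀ A : Fin d → Matrix (Fin D) (Fin D) ℂ,
            ∑ j : Fin m → Fin d, p j * (σ * mpsProd A j).trace = 0) :=
  stmt9_general d D m p
end

section
/- For bond dimension D = 1, the span of matrix product states is the symmetric subspace: the ℂ-linear span of the vectors ψ(ω, a, m) ∈ ((Fin m → Fin d) → ℂ) with ω ∈ ℂ and a : Fin d → ℂ (so ψ(ω,a,m)(i) = ω · a_{i_1}⋯a_{i_m}) equals the subspace of all v : (Fin m → Fin d) → ℂ that are invariant under permutations of the m sites, i.e., v(i ∘ π) = v(i) for every permutation π of Fin m. -/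
/-!
A function `v` of configurations `i : ι → σ` is invariant under permutations of the sites iff it
depends only on the occupation numbers `siteType i : σ →₀ ℕ`. If a linear functional
`v ↦ ∑ i, v i * c i` kills every product state `i ↦ ∏ k, a (i k)`, then the polynomial
`∑ i, c i • X ^ siteType i` vanishes on all of `K^σ`, hence is zero since `K` is infinite. Its
coefficients are the sums of `c` over the fibres of `siteType`, so the functional also kills every
permutation-invariant vector. Product states are themselves invariant, so the span of the product
states and the symmetric subspace have the same annihilator, and therefore coincide.
-/

open Finset MvPolynomial

namespace ProductState

variable {K ι σ : Type*} [Fintype ι]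

noncomputable def siteType (i : ι → σ) : σ →₀ ℕ := ∑ k, Finsupp.single (i k) 1

theorem siteType_apply [DecidableEq σ] (i : ι → σ) (j : σ) : siteType i j = #{k | i k = j} := by
  simp only [siteType, Finsupp.finsetSum_apply, Finsupp.single_apply, Finset.sum_boole,
    Nat.cast_id]

theorem exists_perm_comp_eq_of_siteType_eq [DecidableEq σ] {i i' : ι → σ}
    (h : siteType i = siteType i') : ∃ π : Equiv.Perm ι, i' ∘ π = i := by
  have hfibre (j : σ) : Fintype.card {k // i k = j} = Fintype.card {k // i' k = j} := by
    simpa [Fintype.card_subtype, siteType_apply] using DFunLike.congr_fun h j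
  let e (j : σ) := Fintype.equivOfCardEq (hfibre j)
  exact ⟨Equiv.ofFiberEquiv e, funext (Equiv.ofFiberEquiv_map e)⟩

variable (K ι σ) in
def symmetricSubspace [Semiring K] : Submodule K ((ι → σ) → K) where
  carrier := {v | ∀ (π : Equiv.Perm ι) (i : ι → σ), v (i ∘ π) = v i}
  add_mem' hv hw π i := by simp [hv π i, hw π i]
  zero_mem' _ _ := rfl
  smul_mem' c v hv π i := by simp [hv π i]

theorem apply_eq_of_siteType_eq [Semiring K] [DecidableEq σ] {v : (ι → σ) → K}
    (hv : v ∈ symmetricSubspace K ι σ) {i i' : ι → σ} (h : siteType i = siteType i') :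
    v i = v i' := by
  obtain ⟨π, rfl⟩ := exists_perm_comp_eq_of_siteType_eq h
  exact hv π i'

variable (ι) in
def productState [CommMonoid K] (a : σ → K) : (ι → σ) → K := fun i => ∏ k, a (i k)

theorem productState_mem_symmetricSubspace [CommSemiring K] (a : σ → K) :
    productState ι a ∈ symmetricSubspace K ι σ :=
  fun π i => Equiv.prod_comp π fun k => a (i k)

theorem prod_X_eq_monomial_siteType [CommSemiring K] (i : ι → σ) :
    ∏ k, (X (i k) : MvPolynomial σ K) = monomial (siteType i) 1 := by
  simp only [siteType, monomial_sum_one, X]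

theorem sum_fibre_siteType_eq_zero [CommRing K] [IsDomain K] [Infinite K] [Fintype σ]
    [DecidableEq ι] [DecidableEq σ] {c : (ι → σ) → K}
    (hc : ∀ a : σ → K, ∑ i, c i * productState ι a i = 0) (b : σ →₀ ℕ) :
    ∑ i with siteType i = b, c i = 0 := by
  set P : MvPolynomial σ K := ∑ i, monomial (siteType i) (c i)
  have hmonomial (i : ι → σ) : monomial (siteType i) (c i) = C (c i) * ∏ k, X (i k) := by
    rw [prod_X_eq_monomial_siteType, C_mul_monomial, mul_one]
  have hP : P = 0 := MvPolynomial.funext fun a => by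
    simpa [P, hmonomial, productState] using hc a
  simpa [P, coeff_sum, coeff_monomial, Finset.sum_filter] using congr_arg (coeff b) hP

theorem sum_mul_eq_zero_of_mem_symmetricSubspace [CommRing K] [IsDomain K] [Infinite K]
    [Fintype σ] [DecidableEq ι] [DecidableEq σ] {c : (ι → σ) → K}
    (hc : ∀ a : σ → K, ∑ i, c i * productState ι a i = 0) {v : (ι → σ) → K}
    (hv : v ∈ symmetricSubspace K ι σ) : ∑ i, v i * c i = 0 := by
  rw [← Finset.sum_fiberwise_of_maps_to (g := siteType) (t := univ.image siteType)
    fun i _ => mem_image_of_mem siteType (mem_univ i)]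
  refine Finset.sum_eq_zero fun b hb => ?_
  obtain ⟨i₀, -, rfl⟩ := Finset.mem_image.mp hb
  calc ∑ i with siteType i = siteType i₀, v i * c i
      = ∑ i with siteType i = siteType i₀, v i₀ * c i :=
        Finset.sum_congr rfl fun i hi => by
          rw [apply_eq_of_siteType_eq hv (Finset.mem_filter.mp hi).2]
    _ = 0 := by rw [← Finset.mul_sum, sum_fibre_siteType_eq_zero hc, mul_zero]

theorem span_productState_eq_symmetricSubspace [Field K] [Infinite K] [Fintype σ] :
    Submodule.span K (Set.range (productState ι : (σ → K) → (ι → σ) → K)) = symmetricSubspace K ι σ := by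
  classical
  refine le_antisymm (Submodule.span_le.mpr ?_) ?_
  · rintro _ ⟨a, rfl⟩
    exact productState_mem_symmetricSubspace a
  · refine Subspace.dualAnnihilator_le_dualAnnihilator_iff.mp fun φ hφ => ?_
    rw [Submodule.mem_dualAnnihilator] at hφ ⊢
    have hφ_apply (x : (ι → σ) → K) : φ x = ∑ i, x i * φ (Pi.single i 1) := by
      rw [φ.pi_apply_eq_sum_univ x]
      congr! with i j
      simp [Pi.single_apply, eq_comm]
    intro v hv
    rw [hφ_apply]
    refine sum_mul_eq_zero_of_mem_symmetricSubspace (fun a => ?_) hv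
    have := hφ _ (Submodule.subset_span ⟨a, rfl⟩)
    rw [hφ_apply] at this
    simpa only [mul_comm] using this

end ProductState

open ProductState in
theorem stmt14_general (d m : ℕ) :
    ((Submodule.span ℂ (Set.range fun ωa : ℂ × (Fin d → ℂ) =>
        fun i : Fin m → Fin d => ωa.1 * ∏ k : Fin m, ωa.2 (i k)) :
          Submodule ℂ ((Fin m → Fin d) → ℂ)) : Set ((Fin m → Fin d) → ℂ))
      = { v : (Fin m → Fin d) → ℂ |
          ∀ π : Equiv.Perm (Fin m), ∀ i : Fin m → Fin d, v (i ∘ π) = v i } := by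
  show _ = (symmetricSubspace ℂ (Fin m) (Fin d) : Set ((Fin m → Fin d) → ℂ))
  congr 1
  rw [← span_productState_eq_symmetricSubspace]
  refine le_antisymm (Submodule.span_le.mpr ?_) (Submodule.span_mono ?_)
  · rintro _ ⟨⟨ω, a⟩, rfl⟩
    exact Submodule.smul_mem _ ω (Submodule.subset_span ⟨a, rfl⟩)
  · rintro _ ⟨a, rfl⟩
    exact ⟨(1, a), funext fun i => one_mul _⟩

/-- For bond dimension `D = 1`, the span of the matrix product states
`ψ(ω,a,m)(i) = ω · a_{i_1} ⋯ a_{i_m}` equals the symmetric subspace, i.e. the set of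
vectors invariant under permutations of the `m` sites. -/
theorem stmt14 (d m : ℕ) (hd : 0 < d) :
    ((Submodule.span ℂ (Set.range fun ωa : ℂ × (Fin d → ℂ) =>
        fun i : Fin m → Fin d => ωa.1 * ∏ k : Fin m, ωa.2 (i k)) :
          Submodule ℂ ((Fin m → Fin d) → ℂ)) : Set ((Fin m → Fin d) → ℂ))
      = { v : (Fin m → Fin d) → ℂ |
          ∀ π : Equiv.Perm (Fin m), ∀ i : Fin m → Fin d, v (i ∘ π) = v i } :=
  stmt14_general d m
end

section
/- Every vector in (ℂ^d)^{⊗m} is a matrix product state for sufficiently large bond dimension: for every v : (Fin m → Fin d) → ℂ there exist a bond dimension D, a boundary condition ω ∈ M_D(ℂ) and matrices A : Fin d → M_D(ℂ) such that v(i_1,…,i_m) = tr(ω · A_{i_1}⋯A_{i_m}) for all (i_1,…,i_m); moreover one may take D = d^m. -/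
/-!
The bond space is spanned by the strings `s : Fin m → α`, and `A a` is the transfer matrix of a
cyclic shift register: it allows the step `s ↦ rotate s` exactly when the first letter of `s`
is `a`. After `m` steps every string is back where it started, so the product `A_{i_1} ⋯ A_{i_m}`
is the matrix unit at `(i, i)`, and `ω = diagonal v` reads off `tr (ω · single i i 1) = v i`.
-/

open Matrix

namespace MatrixProductState

open Fin.CommRing

variable {α R : Type*} {n : ℕ}

def rotate (s : Fin (n + 1) → α) : Fin (n + 1) → α := fun j => s (j + 1)

lemma rotate_iterate_apply (k : ℕ) (s : Fin (n + 1) → α) (j : Fin (n + 1)) :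
    rotate^[k] s j = s (j + k) := by
  induction k generalizing s with
  | zero => simp
  | succ k ih =>
    rw [Function.iterate_succ_apply, ih, rotate, Nat.cast_succ, add_assoc]

lemma rotate_iterate_self (s : Fin (n + 1) → α) : rotate^[n + 1] s = s := by
  funext j
  simp [rotate_iterate_apply]

def cyclicWord (s : Fin (n + 1) → α) (k : ℕ) : List α :=
  (List.range k).map fun j : ℕ => s j

lemma cyclicWord_succ (s : Fin (n + 1) → α) (k : ℕ) :
    cyclicWord s (k + 1) = s 0 :: cyclicWord (rotate s) k := by
  simp [cyclicWord, List.range_succ_eq_map, rotate]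

lemma cyclicWord_eq_map_finRange_iff (s i : Fin (n + 1) → α) :
    cyclicWord s (n + 1) = (List.finRange (n + 1)).map i ↔ s = i := by
  rw [cyclicWord, ← List.map_coe_finRange_eq_range, List.map_map, List.map_inj_left, funext_iff]
  simp

variable [Fintype α] [DecidableEq α] [Semiring R]

def transferMatrix (a : α) : Matrix (Fin (n + 1) → α) (Fin (n + 1) → α) R :=
  of fun s t => if s 0 = a ∧ t = rotate s then 1 else 0

lemma list_prod_map_transferMatrix_apply (l : List α) (s t : Fin (n + 1) → α) :
    (l.map transferMatrix).prod s t =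
      if cyclicWord s l.length = l ∧ t = rotate^[l.length] s then (1 : R) else 0 := by
  induction l generalizing s with
  | nil =>
    simp [cyclicWord, one_apply, eq_comm]
  | cons a l ih =>
    rw [List.map_cons, List.prod_cons, mul_apply, Fintype.sum_eq_single (rotate s)]
    · simp only [transferMatrix, of_apply, ih, List.length_cons, cyclicWord_succ,
        Function.iterate_succ_apply, List.cons_eq_cons, and_true, ite_zero_mul_ite_zero, mul_one,
        and_assoc]
    · intro u hu
      simp [transferMatrix, hu]

lemma prod_map_finRange_transferMatrix (i : Fin (n + 1) → α) :
    ((List.finRange (n + 1)).map fun t => (transferMatrix (i t) : Matrix _ _ R)).prod =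
      single i i 1 := by
  ext s t
  rw [← Function.comp_def, ← List.map_map, list_prod_map_transferMatrix_apply, List.length_map,
    List.length_finRange, rotate_iterate_self, single_apply]
  simp only [cyclicWord_eq_map_finRange_iff]
  grind

variable (R) in
theorem exists_prod_map_finRange_eq_single (m : ℕ) :
    ∃ A : α → Matrix (Fin m → α) (Fin m → α) R,
      ∀ i : Fin m → α, ((List.finRange m).map fun t => A (i t)).prod = single i i 1 := by
  cases m with
  | zero => exact ⟨0, fun i => by ext s t; simp [Subsingleton.elim s i, Subsingleton.elim t i]⟩
  | succ n => exact ⟨transferMatrix, prod_map_finRange_transferMatrix⟩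

end MatrixProductState

lemma Matrix.trace_reindex {ι κ R : Type*} [Fintype ι] [Fintype κ] [AddCommMonoid R]
    (e : ι ≃ κ) (M : Matrix ι ι R) : (reindex e e M).trace = M.trace :=
  e.symm.sum_comp fun i => M i i

lemma mpsProd_reindex {ι : Type*} [Fintype ι] [DecidableEq ι] {d D n : ℕ} (e : ι ≃ Fin D)
    (A : Fin d → Matrix ι ι ℂ) (i : Fin n → Fin d) :
    mpsProd (fun a => reindexAlgEquiv ℂ ℂ e (A a)) i =
      reindexAlgEquiv ℂ ℂ e ((List.finRange n).map fun t => A (i t)).prod := by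
  rw [mpsProd, map_list_prod, List.map_map]
  rfl

theorem stmt15_general (d m : ℕ) (v : (Fin m → Fin d) → ℂ) :
    ∃ D : ℕ, D = d ^ m ∧
      ∃ (ω : Matrix (Fin D) (Fin D) ℂ) (A : Fin d → Matrix (Fin D) (Fin D) ℂ),
        ∀ i : Fin m → Fin d, v i = (ω * mpsProd A i).trace := by
  obtain ⟨A, hA⟩ := MatrixProductState.exists_prod_map_finRange_eq_single ℂ m (α := Fin d)
  let e : (Fin m → Fin d) ≃ Fin (d ^ m) := Fintype.equivFinOfCardEq (by simp)
  refine ⟨d ^ m, rfl, reindexAlgEquiv ℂ ℂ e (diagonal v),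
    fun a => reindexAlgEquiv ℂ ℂ e (A a), fun i => ?_⟩
  rw [mpsProd_reindex, hA, ← map_mul, coe_reindexAlgEquiv, trace_reindex, trace_mul_single]
  simp

/-- Every vector of `(ℂ^d)^{⊗m}` is a matrix product state for sufficiently large bond
dimension; one may take the bond dimension `D = d^m`. -/
theorem stmt15 (d m : ℕ) (hd : 0 < d) (v : (Fin m → Fin d) → ℂ) :
    ∃ D : ℕ, D = d ^ m ∧
      ∃ (ω : Matrix (Fin D) (Fin D) ℂ) (A : Fin d → Matrix (Fin D) (Fin D) ℂ),
        ∀ i : Fin m → Fin d, v i = (ω * mpsProd A i).trace :=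
  stmt15_general d m v
end
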